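/- Fix 2 ≤ m ≤ n−1 and suppose H(ψ), H(χ) ∈ Z_{n,m} are commutative. Define ψ'{i,j} = ψ(i,j) on unordered pairs (subsets of size 1 or 2) of {m+1,…,n}, and similarly χ'. Then H(ψ) and H(χ) are isomorphic if and only if there exist σ ∈ S_{{m+1,…,n}} and τ ∈ S_m fixing 1 such that χ'({i^σ, j^σ})^τ = ψ'({i,j}) for all i, j ∈ {m+1,…,n}. -/

import Mathlib

/-
Every element of `{1,…,m}` is a product in `H(ψ)` (the zero is `1·1`, the others lie in the
image of `ψ`), while every product in `H(χ)` lies in `{1,…,m}`. Hence an isomorphism maps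
`{1,…,m}` into, and by finiteness onto, `{1,…,m}`, so it splits into a permutation `τ` of
`{1,…,m}` and a permutation `σ` of `A = {m+1,…,n}`; multiplicativity then says exactly that
`τ` fixes the zero `1 = 1·1` and that `ψ(i,j)^τ = χ(i^σ, j^σ)`. Conversely any such pair glues
to an isomorphism.
-/

open Equiv Equiv.Perm

theorem Equiv.Perm.subtypeCongr_subtypePerm {α : Type*} {p : α → Prop} [DecidablePred p]
    (π : Perm α) (h : ∀ x, p (π x) ↔ p x) :
    (π.subtypePerm h).subtypeCongr (π.subtypePerm fun x => not_congr (h x)) = π := by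
  ext x
  by_cases hx : p x <;> simp [hx]

theorem Equiv.Perm.subtypeCongr_apply_iff {α : Type*} {p : α → Prop} [DecidablePred p]
    (ep : Perm {x // p x}) (en : Perm {x // ¬p x}) (x : α) : p (ep.subtypeCongr en x) ↔ p x := by
  by_cases hx : p x
  · simpa [hx] using (ep ⟨x, hx⟩).2
  · simpa [hx] using (en ⟨x, hx⟩).2

namespace ZSemigroup

variable {n m : ℕ} (hm : 0 < m) (hmn : m ≤ n)

/-- The multiplication of `H(ψ)`, with the points `1, …, n` of the paper indexed by `Fin n`,
so that the zero `1` is `0` and `{1,…,m}` is `{x | x.val < m}`. -/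
def mul (ψ : {x : Fin n // m ≤ x.val} → {x : Fin n // m ≤ x.val} → Fin m) (x y : Fin n) :
    Fin n :=
  if h : m ≤ x.val ∧ m ≤ y.val then Fin.castLE hmn (ψ ⟨x, h.1⟩ ⟨y, h.2⟩)
  else Fin.castLE hmn ⟨0, hm⟩

variable (ψ χ : {x : Fin n // m ≤ x.val} → {x : Fin n // m ≤ x.val} → Fin m)

theorem mul_coe_coe (a b : {x : Fin n // m ≤ x.val}) :
    mul hm hmn ψ a b = Fin.castLE hmn (ψ a b) :=
  dif_pos ⟨a.2, b.2⟩

theorem mul_of_not_high {x y : Fin n} (h : ¬(m ≤ x.val ∧ m ≤ y.val)) :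
    mul hm hmn ψ x y = Fin.castLE hmn ⟨0, hm⟩ :=
  dif_neg h

theorem not_high_mul (x y : Fin n) : ¬m ≤ (mul hm hmn ψ x y).val := by
  unfold mul
  split <;> simp; omega

theorem exists_mul_eq (hψ : ∀ b : Fin m, b.val ≠ 0 → ∃ x y, ψ x y = b) {x : Fin n}
    (hx : ¬m ≤ x.val) : ∃ a b, mul hm hmn ψ a b = x := by
  by_cases hx0 : x.val = 0
  · exact ⟨x, x, (mul_of_not_high hm hmn ψ (by omega)).trans (Fin.ext hx0.symm)⟩
  · obtain ⟨a, b, hab⟩ := hψ ⟨x.val, by omega⟩ hx0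
    exact ⟨a, b, (mul_coe_coe hm hmn ψ a b).trans (by simp [hab])⟩

theorem high_iff_of_map_mul (hψ : ∀ b : Fin m, b.val ≠ 0 → ∃ x y, ψ x y = b)
    (π : Perm (Fin n)) (hπ : ∀ x y, π (mul hm hmn ψ x y) = mul hm hmn χ (π x) (π y))
    (x : Fin n) : m ≤ (π x).val ↔ m ≤ x.val := by
  have hlow : ∀ y : Fin n, ¬m ≤ y.val → ¬m ≤ (π y).val := by
    intro y hy
    obtain ⟨a, b, rfl⟩ := exists_mul_eq hm hmn ψ hψ hy
    rw [hπ]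
    exact not_high_mul hm hmn χ _ _
  refine ⟨not_imp_not.1 (hlow x), not_imp_not.1 fun hx => ?_⟩
  -- a permutation of a finite type mapping a set into itself maps it onto itself
  simpa using perm_symm_on_of_perm_on_finite hlow hx

def lowEquiv : Fin m ≃ {x : Fin n // ¬m ≤ x.val} :=
  (Fin.castLEquiv hmn).trans (subtypeEquivRight fun _ => not_le.symm)

def glue (σ : Perm {x : Fin n // m ≤ x.val}) (τ : Perm (Fin m)) : Perm (Fin n) :=
  σ.subtypeCongr ((lowEquiv hmn).permCongr τ)

section glue

variable (σ : Perm {x : Fin n // m ≤ x.val}) (τ : Perm (Fin m))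

theorem glue_coe (a : {x : Fin n // m ≤ x.val}) : glue hmn σ τ a = σ a :=
  subtypeCongr.left_apply_subtype _ _ a

theorem glue_castLE (b : Fin m) : glue hmn σ τ (Fin.castLE hmn b) = Fin.castLE hmn (τ b) := by
  simp [glue, lowEquiv]

theorem high_glue_iff (x : Fin n) : m ≤ (glue hmn σ τ x).val ↔ m ≤ x.val :=
  subtypeCongr_apply_iff σ _ x

theorem exists_glue_eq (π : Perm (Fin n)) (hπ : ∀ x, m ≤ (π x).val ↔ m ≤ x.val) :
    ∃ σ τ, glue hmn σ τ = π :=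
  ⟨π.subtypePerm hπ, (lowEquiv hmn).permCongr.symm (π.subtypePerm fun x => not_congr (hπ x)),
    by rw [glue, Equiv.apply_symm_apply, subtypeCongr_subtypePerm]⟩

theorem map_mul_glue_iff :
    (∀ x y, glue hmn σ τ (mul hm hmn ψ x y) = mul hm hmn χ (glue hmn σ τ x) (glue hmn σ τ y)) ↔
      τ ⟨0, hm⟩ = ⟨0, hm⟩ ∧ ∀ i j, τ (ψ i j) = χ (σ i) (σ j) := by
  constructor
  · intro h
    refine ⟨?_, fun i j => ?_⟩
    · have h0 := h (Fin.castLE hmn ⟨0, hm⟩) (Fin.castLE hmn ⟨0, hm⟩)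
      rw [mul_of_not_high hm hmn ψ (by simp; omega), glue_castLE,
        mul_of_not_high hm hmn χ (by simp)] at h0
      exact Fin.castLE_injective hmn h0
    · have hij := h i j
      rw [mul_coe_coe, glue_castLE, glue_coe, glue_coe, mul_coe_coe] at hij
      exact Fin.castLE_injective hmn hij
  · rintro ⟨h0, hτ⟩ x y
    by_cases hxy : m ≤ x.val ∧ m ≤ y.val
    · lift x to {x : Fin n // m ≤ x.val} using hxy.1
      lift y to {x : Fin n // m ≤ x.val} using hxy.2
      rw [mul_coe_coe, glue_castLE, glue_coe, glue_coe, mul_coe_coe, hτ]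
    · rw [mul_of_not_high hm hmn ψ hxy, glue_castLE, h0,
        mul_of_not_high hm hmn χ (by simpa only [high_glue_iff] using hxy)]

end glue

end ZSemigroup

/-- For commutative H(ψ), H(χ) ∈ Z_{n,m}, with ψ', χ' the induced functions on unordered
pairs of A = {m+1,…,n}: the semigroups are isomorphic iff there are σ ∈ S_A and τ ∈ S_m
fixing the zero with χ'({σi, σj})^τ = ψ'({i,j}) for all i, j ∈ A. -/
theorem stmt17 (n m : ℕ) (hm2 : 2 ≤ m) (hmn : m ≤ n - 1)
    (ψ χ : {x : Fin n // m ≤ x.val} → {x : Fin n // m ≤ x.val} → Fin m)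
    (hψ : ∀ b : Fin m, b.val ≠ 0 → ∃ x y, ψ x y = b)
    (ψ' χ' : Sym2 {x : Fin n // m ≤ x.val} → Fin m)
    (hψ' : ∀ i j, ψ' (s(i, j)) = ψ i j)
    (hχ' : ∀ i j, χ' (s(i, j)) = χ i j)
    (mulψ mulχ : Fin n → Fin n → Fin n)
    (hmulψ : ∀ x y, mulψ x y =
      if h : m ≤ x.val ∧ m ≤ y.val then
        Fin.castLE (by omega) (ψ ⟨x, h.1⟩ ⟨y, h.2⟩) else ⟨0, by omega⟩)
    (hmulχ : ∀ x y, mulχ x y =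
      if h : m ≤ x.val ∧ m ≤ y.val then
        Fin.castLE (by omega) (χ ⟨x, h.1⟩ ⟨y, h.2⟩) else ⟨0, by omega⟩) :
    (∃ π : Equiv.Perm (Fin n), ∀ x y, π (mulψ x y) = mulχ (π x) (π y)) ↔
    (∃ (σ : Equiv.Perm {x : Fin n // m ≤ x.val}) (τ : Equiv.Perm (Fin m)),
      (τ ⟨0, by omega⟩).val = 0 ∧
      ∀ i j, τ (χ' (s(σ i, σ j))) = ψ' (s(i, j))) := by
  have hm : 0 < m := by omega
  have hmn' : m ≤ n := by omega
  obtain rfl : mulψ = ZSemigroup.mul hm hmn' ψ := funext₂ hmulψ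
  obtain rfl : mulχ = ZSemigroup.mul hm hmn' χ := funext₂ hmulχ
  simp only [hψ', hχ']
  constructor
  · rintro ⟨π, hπ⟩
    obtain ⟨σ, τ, rfl⟩ := ZSemigroup.exists_glue_eq hmn' π
      (ZSemigroup.high_iff_of_map_mul hm hmn' ψ χ hψ π hπ)
    obtain ⟨hτ0, hτ⟩ := (ZSemigroup.map_mul_glue_iff hm hmn' ψ χ σ τ).1 hπ
    exact ⟨σ, τ.symm, congrArg Fin.val (τ.symm_apply_eq.2 hτ0.symm),
      fun i j => τ.symm_apply_eq.2 (hτ i j).symm⟩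
  · rintro ⟨σ, τ, hτ0, hτ⟩
    refine ⟨ZSemigroup.glue hmn' σ τ.symm,
      (ZSemigroup.map_mul_glue_iff hm hmn' ψ χ σ τ.symm).2 ⟨?_, fun i j => ?_⟩⟩
    · exact τ.symm_apply_eq.2 (Fin.ext hτ0).symm
    · rw [τ.symm_apply_eq, hτ]
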